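/- arXiv:0907.5565 — 2 statements merged into one kernel-verified Lean document; each statement's English description precedes it below -/
import Mathlib

section
/- Let Ω ⊆ ℍ be a symmetric slice domain and f : Ω → ℍ a slice regular function such that f(Ω ∩ L_I) ⊆ L_I for all I ∈ S. If f(x₀ + y₀I₀) = 0 for some I₀ ∈ S, then f(x₀ + y₀I) = 0 for all I ∈ S. -/
noncomputable section

abbrev H := Quaternion ℝ

/-- The sphere of quaternion imaginary units. -/
def Sph : Set H := {q : H | q ^ 2 = -1}

/-- The complex line (Slice) through 1 and `I`. -/
def Slice (I : H) : Set H := {q : H | ∃ x y : ℝ, q = (x : H) + y • I}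

/-- The 2-sphere `x + y𝕊`. -/
def sphSet (x y : ℝ) : Set H := {q : H | ∃ I ∈ Sph, q = (x : H) + y • I}

/-- The real axis inside the quaternions. -/
def realAxis : Set H := {q : H | ∃ r : ℝ, q = (r : H)}

/-- `f` is holomorphic on the `I`-Slice of `Ω`: at every point of `Ω ∩ L_I` the
map `(x,y) ↦ f(x+yI)` is (real) differentiable and satisfies the
Cauchy–Riemann equation `∂f/∂x + I ∂f/∂y = 0`. -/
def HoloSlice (Ω : Set H) (f : H → H) (I : H) : Prop :=
  ∀ x y : ℝ, (x : H) + y • I ∈ Ω →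
    DifferentiableAt ℝ (fun p : ℝ × ℝ => f ((p.1 : H) + p.2 • I)) (x, y) ∧
    fderiv ℝ (fun p : ℝ × ℝ => f ((p.1 : H) + p.2 • I)) (x, y) (1, 0)
      + I * fderiv ℝ (fun p : ℝ × ℝ => f ((p.1 : H) + p.2 • I)) (x, y) (0, 1) = 0

/-- Slice regular functions: every Slice restriction is holomorphic. -/
def SliceRegular (Ω : Set H) (f : H → H) : Prop :=
  ∀ I ∈ Sph, HoloSlice Ω f I

/-- A Slice domain: a domain intersecting the real axis whose slices are domains. -/
def IsSliceDomain (Ω : Set H) : Prop :=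
  IsOpen Ω ∧ IsConnected Ω ∧ (Ω ∩ realAxis).Nonempty ∧
  ∀ I ∈ Sph, IsConnected (Ω ∩ Slice I)

/-- Axially symmetric set. -/
def AxSymm (C : Set H) : Prop :=
  ∀ (x y : ℝ), ∀ I ∈ Sph, (x : H) + y • I ∈ C → ∀ J ∈ Sph, (x : H) + y • J ∈ C

/-- Symmetric Slice domain. -/
def IsSymmSliceDomain (Ω : Set H) : Prop := IsSliceDomain Ω ∧ AxSymm Ω

/-- Orthogonality of quaternions w.r.t. the Euclidean inner product `re (p * star q)`. -/
def Orth (I J : H) : Prop := (I * star J).re = 0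

/-- `F, G` give a splitting `f = F + G J` of `f` on the Slice `Ω ∩ L_I`,
with `F, G` holomorphic and `L_I`-valued. -/
structure IsSplitting (Ω : Set H) (f : H → H) (I J : H) (F G : H → H) : Prop where
  mapsF : ∀ q ∈ Ω ∩ Slice I, F q ∈ Slice I
  mapsG : ∀ q ∈ Ω ∩ Slice I, G q ∈ Slice I
  holoF : HoloSlice Ω F I
  holoG : HoloSlice Ω G I
  eq : ∀ q ∈ Ω ∩ Slice I, f q = F q + G q * J

/-- `h` is the regular product `f * g`: it is Slice regular and restricts on some
Slice `L_I` (with `I ⊥ J`, splittings `f = F + GJ`, `g = F' + G'J`) to the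
product formula.  (Note `star` is quaternionic conjugation, which restricts to
complex conjugation on each Slice.) -/
def IsRegularProduct (Ω : Set H) (f g h : H → H) : Prop :=
  SliceRegular Ω h ∧
  ∃ I ∈ Sph, ∃ J ∈ Sph, Orth I J ∧
    ∃ F G F' G' : H → H, IsSplitting Ω f I J F G ∧ IsSplitting Ω g I J F' G' ∧
      ∀ q ∈ Ω ∩ Slice I,
        h q = (F q * F' q - G q * star (G' (star q)))
            + (F q * G' q + G q * star (F' (star q))) * J

/-- `fc` is the regular conjugate of `f`. -/
def IsRegularConj (Ω : Set H) (f fc : H → H) : Prop :=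
  SliceRegular Ω fc ∧
  ∃ I ∈ Sph, ∃ J ∈ Sph, Orth I J ∧
    ∃ F G : H → H, IsSplitting Ω f I J F G ∧
      ∀ q ∈ Ω ∩ Slice I, fc q = star (F (star q)) - G q * J

/-- `fs` is the symmetrization `f^s = f * f^c` of `f`. -/
def IsSymmetrization (Ω : Set H) (f fs : H → H) : Prop :=
  ∃ fc : H → H, IsRegularConj Ω f fc ∧ IsRegularProduct Ω f fc fs

/-- The degenerate set of `f`: union of the spheres `x + y𝕊` (`y ≠ 0`)
contained in `Ω` on which `f` is constant. -/
def DegSet (Ω : Set H) (f : H → H) : Set H :=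
  {q : H | ∃ x y : ℝ, y ≠ 0 ∧ q ∈ sphSet x y ∧ sphSet x y ⊆ Ω ∧
    ∀ p ∈ sphSet x y, ∀ p' ∈ sphSet x y, f p = f p'}

/-!
Through the algebra embedding `ℂ → L_I`, `i ↦ I`, the restriction of `f` to a slice `L_I` is a
holomorphic function `f_I` on `D = {x + yi | x + yI ∈ Ω}`; by axial symmetry `D` does not depend
on `I`, and it is connected because `Ω ∩ L_I` is. A function preserving every slice is real on
`Ω ∩ ℝ`, so all the `f_I` agree on the real points of `D`, and the identity theorem gives
`f_I = f_{I₀}` on `D`. In particular `f_I (x₀ + y₀i) = f_{I₀} (x₀ + y₀i) = 0`.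
-/

open Complex Filter Set Topology

lemma mul_self_eq_neg_one_of_mem_sph {I : H} (hI : I ∈ Sph) : I * I = -1 :=
  (sq I).symm.trans hI

def sliceEmb (I : H) (hI : I ∈ Sph) : ℂ →ₐ[ℝ] H :=
  Complex.liftAux I (mul_self_eq_neg_one_of_mem_sph hI)

/-- Some `ℝ`-linear left inverse of `sliceEmb I hI`; only its values on `Slice I` matter. -/
def sliceProj (I : H) (hI : I ∈ Sph) : H →L[ℝ] ℂ :=
  LinearMap.toContinuousLinearMap (sliceEmb I hI).toLinearMap.leftInverse

/-- The restriction `f_I` of `f` to the slice `L_I`, read in the complex coordinate. -/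
def sliceFun (f : H → H) (I : H) (hI : I ∈ Sph) (z : ℂ) : ℂ :=
  sliceProj I hI (f (sliceEmb I hI z))

section SliceCoordinates

variable {I : H} (hI : I ∈ Sph)

lemma sliceEmb_apply (z : ℂ) : sliceEmb I hI z = (z.re : H) + z.im • I := by
  simp [sliceEmb, Complex.liftAux_apply, Quaternion.algebraMap_def]

lemma sliceEmb_ofReal (x : ℝ) : sliceEmb I hI x = x :=
  (sliceEmb I hI).commutes x

lemma sliceEmb_I : sliceEmb I hI Complex.I = I :=
  liftAux_apply_I I _

lemma sliceEmb_mem_slice (z : ℂ) : sliceEmb I hI z ∈ Slice I :=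
  ⟨z.re, z.im, sliceEmb_apply hI z⟩

lemma sliceEmb_injective : Function.Injective (sliceEmb I hI) :=
  (sliceEmb I hI).toRingHom.injective

lemma range_sliceEmb : range (sliceEmb I hI) = Slice I := by
  ext q
  simp only [mem_range, sliceEmb_apply, Slice, mem_ofPred_eq]
  exact ⟨fun ⟨z, hz⟩ => ⟨z.re, z.im, hz.symm⟩, fun ⟨x, y, hq⟩ => ⟨⟨x, y⟩, hq.symm⟩⟩

lemma isClosedEmbedding_sliceEmb : IsClosedEmbedding (sliceEmb I hI) :=
  (sliceEmb I hI).toLinearMap.isClosedEmbedding_of_injective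
    (LinearMap.ker_eq_bot.mpr (sliceEmb_injective hI))

lemma sliceProj_sliceEmb (z : ℂ) : sliceProj I hI (sliceEmb I hI z) = z :=
  LinearMap.leftInverse_apply_of_inj (LinearMap.ker_eq_bot.mpr (sliceEmb_injective hI)) z

lemma sliceEmb_sliceProj {q : H} (hq : q ∈ Slice I) : sliceEmb I hI (sliceProj I hI q) = q := by
  obtain ⟨z, rfl⟩ := (range_sliceEmb hI).symm ▸ hq
  rw [sliceProj_sliceEmb]

lemma sliceFun_eq_zero_iff {f : H → H} {z : ℂ} (hz : f (sliceEmb I hI z) ∈ Slice I) :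
    sliceFun f I hI z = 0 ↔ f (sliceEmb I hI z) = 0 := by
  rw [← (sliceEmb_injective hI).eq_iff, map_zero, sliceFun, sliceEmb_sliceProj hI hz]

end SliceCoordinates

section Holomorphy

variable {I : H} (hI : I ∈ Sph)

lemma HoloSlice.exists_hasFDerivAt_comp_sliceEmb {Ω : Set H} {f : H → H}
    (hf : HoloSlice Ω f I) {z : ℂ} (hz : sliceEmb I hI z ∈ Ω) :
    ∃ L : ℂ →L[ℝ] H, HasFDerivAt (fun w => f (sliceEmb I hI w)) L z ∧
      L Complex.I = I * L 1 := by
  rw [sliceEmb_apply] at hz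
  obtain ⟨hdiff, hCR⟩ := hf z.re z.im hz
  set D := fderiv ℝ (fun p : ℝ × ℝ => f ((p.1 : H) + p.2 • I)) (z.re, z.im)
  have hcomp : (fun w => f (sliceEmb I hI w))
      = (fun p : ℝ × ℝ => f ((p.1 : H) + p.2 • I)) ∘ equivRealProdCLM := by
    ext1 w
    simp [sliceEmb_apply]
  refine ⟨D.comp (equivRealProdCLM : ℂ →L[ℝ] ℝ × ℝ), ?_, ?_⟩
  · rw [hcomp]
    exact hdiff.hasFDerivAt.comp z equivRealProdCLM.hasFDerivAt
  · have hD10 : D (1, 0) = -(I * D (0, 1)) := eq_neg_of_add_eq_zero_left hCR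
    change D (0, 1) = I * D (1, 0)
    rw [hD10, mul_neg, ← mul_assoc, mul_self_eq_neg_one_of_mem_sph hI, neg_one_mul, neg_neg]

lemma differentiableAt_sliceProj_comp {φ : ℂ → H} {L : ℂ →L[ℝ] H} {z : ℂ}
    (hφ : HasFDerivAt φ L z) (hL : L Complex.I = I * L 1)
    (hslice : ∀ᶠ w in 𝓝 z, φ w ∈ Slice I) :
    DifferentiableAt ℂ (fun w => sliceProj I hI (φ w)) z := by
  set ψ : ℂ →L[ℝ] H := LinearMap.toContinuousLinearMap (sliceEmb I hI).toLinearMap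
  have hg : HasFDerivAt (fun w => sliceProj I hI (φ w)) ((sliceProj I hI).comp L) z :=
    (sliceProj I hI).hasFDerivAt.comp z hφ
  have hφ' : HasFDerivAt φ (ψ.comp ((sliceProj I hI).comp L)) z :=
    (ψ.hasFDerivAt.comp z hg).congr_of_eventuallyEq
      (hslice.mono fun w hw => (sliceEmb_sliceProj hI hw).symm)
  -- `φ` stays in `Slice I`, hence so does its derivative.
  have hL1 : L 1 = sliceEmb I hI (sliceProj I hI (L 1)) :=
    congr($(hφ.unique hφ') 1)
  refine (hg.complexOfReal_hasFDerivAt ?_).differentiableAt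
  change sliceProj I hI (L Complex.I) = Complex.I • sliceProj I hI (L 1)
  have hIc : I * L 1 = sliceEmb I hI (Complex.I * sliceProj I hI (L 1)) := by
    rw [map_mul, sliceEmb_I, ← hL1]
  rw [hL, hIc, sliceProj_sliceEmb, smul_eq_mul]

lemma differentiableAt_sliceFun {Ω : Set H} (hΩ : IsOpen Ω) {f : H → H}
    (hf : HoloSlice Ω f I) (hpres : ∀ q ∈ Ω ∩ Slice I, f q ∈ Slice I) {z : ℂ}
    (hz : sliceEmb I hI z ∈ Ω) : DifferentiableAt ℂ (sliceFun f I hI) z := by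
  obtain ⟨L, hL, hLI⟩ := hf.exists_hasFDerivAt_comp_sliceEmb hI hz
  refine differentiableAt_sliceProj_comp hI hL hLI ?_
  have hnhds : sliceEmb I hI ⁻¹' Ω ∈ 𝓝 z :=
    (isClosedEmbedding_sliceEmb hI).continuous.continuousAt.preimage_mem_nhds (hΩ.mem_nhds hz)
  filter_upwards [hnhds] with w hw
  exact hpres _ ⟨hw, sliceEmb_mem_slice hI w⟩

lemma analyticOnNhd_sliceFun {Ω : Set H} (hΩ : IsOpen Ω) {f : H → H}
    (hf : HoloSlice Ω f I) (hpres : ∀ q ∈ Ω ∩ Slice I, f q ∈ Slice I) :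
    AnalyticOnNhd ℂ (sliceFun f I hI) (sliceEmb I hI ⁻¹' Ω) :=
  DifferentiableOn.analyticOnNhd
    (fun _ hz => (differentiableAt_sliceFun hI hΩ hf hpres hz).differentiableWithinAt)
    (hΩ.preimage (isClosedEmbedding_sliceEmb hI).continuous)

end Holomorphy

lemma AxSymm.preimage_sliceEmb_eq {Ω : Set H} (hΩ : AxSymm Ω) {I J : H} (hI : I ∈ Sph)
    (hJ : J ∈ Sph) : sliceEmb I hI ⁻¹' Ω = sliceEmb J hJ ⁻¹' Ω := by
  ext z
  simp only [mem_preimage, sliceEmb_apply]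
  exact ⟨(hΩ _ _ I hI · J hJ), (hΩ _ _ J hJ · I hI)⟩

lemma isPreconnected_preimage_sliceEmb {Ω : Set H} {I : H} (hI : I ∈ Sph)
    (hΩ : IsPreconnected (Ω ∩ Slice I)) : IsPreconnected (sliceEmb I hI ⁻¹' Ω) := by
  rw [← (isClosedEmbedding_sliceEmb hI).isInducing.isPreconnected_image,
    image_preimage_eq_inter_range, range_sliceEmb]
  exact hΩ

lemma mem_sph_i : (⟨0, 1, 0, 0⟩ : H) ∈ Sph := by
  have h : (⟨0, 1, 0, 0⟩ : H) * ⟨0, 1, 0, 0⟩ = -1 := by ext <;> simp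
  exact (sq _).trans h

lemma mem_sph_j : (⟨0, 0, 1, 0⟩ : H) ∈ Sph := by
  have h : (⟨0, 0, 1, 0⟩ : H) * ⟨0, 0, 1, 0⟩ = -1 := by ext <;> simp
  exact (sq _).trans h

lemma exists_im_eq_smul_of_mem_slice {I q : H} (hq : q ∈ Slice I) :
    ∃ y : ℝ, q.imI = y * I.imI ∧ q.imJ = y * I.imJ ∧ q.imK = y * I.imK := by
  obtain ⟨x, y, rfl⟩ := hq
  exact ⟨y, by simp, by simp, by simp⟩

lemma eq_coe_re_of_mem_slice_i_j {q : H} (hi : q ∈ Slice ⟨0, 1, 0, 0⟩)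
    (hj : q ∈ Slice ⟨0, 0, 1, 0⟩) : q = q.re := by
  obtain ⟨b, -, hbJ, hbK⟩ := exists_im_eq_smul_of_mem_slice hi
  obtain ⟨d, hdI, -, -⟩ := exists_im_eq_smul_of_mem_slice hj
  ext
  · rfl
  · simpa using hdI
  · simpa using hbJ
  · simpa using hbK

lemma sliceFun_ofReal_eq {Ω : Set H} {f : H → H}
    (hpres : ∀ I ∈ Sph, ∀ q ∈ Ω ∩ Slice I, f q ∈ Slice I) {x : ℝ} (hx : (x : H) ∈ Ω)
    {I J : H} (hI : I ∈ Sph) (hJ : J ∈ Sph) : sliceFun f I hI x = sliceFun f J hJ x := by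
  have hxI : ∀ I, (x : H) ∈ Slice I := fun I => ⟨x, 0, by simp⟩
  obtain ⟨c, hc⟩ : ∃ c : ℝ, f x = c :=
    ⟨_, eq_coe_re_of_mem_slice_i_j (hpres _ mem_sph_i x ⟨hx, hxI _⟩)
      (hpres _ mem_sph_j x ⟨hx, hxI _⟩)⟩
  have hval : ∀ K (hK : K ∈ Sph), sliceFun f K hK x = c := fun K hK => by
    rw [sliceFun, sliceEmb_ofReal, hc, ← sliceEmb_ofReal hK, sliceProj_sliceEmb]
  rw [hval I hI, hval J hJ]

lemma Complex.frequently_nhdsNE_ofReal {p : ℂ → Prop} {r : ℝ}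
    (h : ∀ᶠ x : ℝ in 𝓝 r, p x) : ∃ᶠ z in 𝓝[≠] (r : ℂ), p z :=
  ((continuous_ofReal.continuousWithinAt (s := {r}ᶜ)).tendsto_nhdsWithin (t := {(r : ℂ)}ᶜ)
    fun _ hx => ofReal_injective.ne hx).frequently
    (h.filter_mono nhdsWithin_le_nhds).frequently

/-- if `f` preserves every slice and vanishes at `x₀ + y₀I₀`,
then it vanishes at `x₀ + y₀I` for every `I ∈ 𝕊`. -/
theorem slice_preserving_zero_spreads (Ω : Set H) (hΩ : IsSymmSliceDomain Ω)
    (f : H → H) (hf : SliceRegular Ω f)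
    (hpres : ∀ I ∈ Sph, ∀ q ∈ Ω ∩ Slice I, f q ∈ Slice I)
    (x₀ y₀ : ℝ) (I₀ : H) (hI₀ : I₀ ∈ Sph) (hmem : (x₀ : H) + y₀ • I₀ ∈ Ω)
    (hz : f ((x₀ : H) + y₀ • I₀) = 0) :
    ∀ I ∈ Sph, f ((x₀ : H) + y₀ • I) = 0 := by
  obtain ⟨⟨hopen, -, ⟨_, hr, r, rfl⟩, hconn⟩, hsymm⟩ := hΩ
  intro I hI
  set D := sliceEmb I₀ hI₀ ⁻¹' Ω
  have hD : ∀ J (hJ : J ∈ Sph), sliceEmb J hJ ⁻¹' Ω = D := fun J hJ =>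
    hsymm.preimage_sliceEmb_eq hJ hI₀
  have hana : ∀ J (hJ : J ∈ Sph), AnalyticOnNhd ℂ (sliceFun f J hJ) D := fun J hJ =>
    hD J hJ ▸ analyticOnNhd_sliceFun hJ hopen (hf J hJ) (hpres J hJ)
  have hDopen : IsOpen D := hopen.preimage (isClosedEmbedding_sliceEmb hI₀).continuous
  have hrD : (r : ℂ) ∈ D := by simpa [D, sliceEmb_ofReal] using hr
  have hfreq : ∃ᶠ z in 𝓝[≠] (r : ℂ), sliceFun f I hI z = sliceFun f I₀ hI₀ z :=
    Complex.frequently_nhdsNE_ofReal <|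
      (continuous_ofReal.continuousAt.eventually_mem (hDopen.mem_nhds hrD)).mono fun x hx => sliceFun_ofReal_eq hpres (by simpa [D, sliceEmb_ofReal] using hx) hI hI₀
  have hz₀ : (⟨x₀, y₀⟩ : ℂ) ∈ D := by simpa [D, sliceEmb_apply] using hmem
  have heq := (hana I hI).eqOn_of_preconnected_of_frequently_eq (hana I₀ hI₀)
    (isPreconnected_preimage_sliceEmb hI₀ (hconn I₀ hI₀).isPreconnected) hrD hfreq hz₀
  have hzero : sliceFun f I hI ⟨x₀, y₀⟩ = 0 := by
    rw [heq, sliceFun_eq_zero_iff hI₀ (hpres I₀ hI₀ _ ⟨hz₀, sliceEmb_mem_slice hI₀ _⟩)]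
    simpa [sliceEmb_apply] using hz
  have hslice := hpres I hI _ ⟨(hD I hI).symm.subset hz₀, sliceEmb_mem_slice hI ⟨x₀, y₀⟩⟩
  simpa [sliceEmb_apply] using (sliceFun_eq_zero_iff hI hslice).mp hzero
end
end

section
/- Let Ω ⊆ ℍ be a symmetric slice domain, f : Ω → ℍ slice regular, and S₀ = x₀ + y₀S ⊂ Ω a sphere. Then: f has a zero in S₀ if and only if f^c has a zero in S₀, if and only if f^s has a zero in S₀, if and only if f^s vanishes identically on S₀. -/
noncomputable section

/-!
By the Representation Formula, a slice regular function on a symmetric slice domain is affine in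
the imaginary unit on every sphere: `g(x + yL) = α + Lβ` for all `L ∈ 𝕊`. Such a function has a
zero on the sphere iff `|α| = |β|` and `Re(α β̄) = 0`, the zero being at `L = -α β̄ / |β|²`.
Computing with splittings on a single slice, `f^c` has the coefficients `(ᾱ, β̄)` and `f^s` the
real coefficients `(|α|² - |β|², 2 Re(α β̄))`, so the three zero conditions coincide; and a
function with real coefficients has a zero on the sphere only if both coefficients vanish, that
is, only if it vanishes on the whole sphere.

The Representation Formula is an identity principle on the slice `L_L`: the difference
`g(x + yL) - ½(1 - LI) g(x + yI) - ½(1 + LI) g(x - yI)` solves the Cauchy–Riemann equation for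
`L` and vanishes on `ℝ`, and the `L_L`-coordinates of its right multiples are holomorphic.
-/

open Quaternion ComplexConjugate Topology

lemma mem_sph_iff {q : H} : q ∈ Sph ↔ q.re = 0 ∧ normSq q = 1 := by
  have hsq : q ∈ Sph ↔ q * q = -1 := by rw [Sph, Set.mem_ofPred_eq, sq]
  constructor
  · intro h
    have hre : q.re = 0 := by
      have hc := hsq.1 h
      rw [Quaternion.ext_iff] at hc
      simp only [re_mul, imI_mul, imJ_mul, imK_mul, re_neg, imI_neg, imJ_neg, imK_neg, re_one,
        imI_one, imJ_one, imK_one] at hc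
      obtain ⟨h1, h2, h3, h4⟩ := hc
      nlinarith [sq_nonneg q.re, sq_nonneg q.imI, sq_nonneg q.imJ, sq_nonneg q.imK]
    refine ⟨hre, coe_injective ?_⟩
    rw [coe_one, ← neg_inj, ← sq_eq_neg_normSq.2 hre, sq]
    exact hsq.1 h
  · rintro ⟨hre, hn⟩
    show q ^ 2 = -1
    rw [sq_eq_neg_normSq.2 hre, hn, coe_one]

section ImaginaryUnit

variable {I : H}

lemma re_of_mem_sph (hI : I ∈ Sph) : I.re = 0 := (mem_sph_iff.1 hI).1

lemma normSq_of_mem_sph (hI : I ∈ Sph) : normSq I = 1 := (mem_sph_iff.1 hI).2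

lemma mul_self_of_mem_sph (hI : I ∈ Sph) : I * I = -1 := by rw [← sq]; exact hI

lemma star_of_mem_sph (hI : I ∈ Sph) : star I = -I := star_eq_neg.2 (re_of_mem_sph hI)

lemma neg_mem_sph (hI : I ∈ Sph) : -I ∈ Sph := by
  show (-I) ^ 2 = -1
  rw [neg_sq]; exact hI

lemma ne_zero_of_mem_sph (hI : I ∈ Sph) : I ≠ 0 := by
  rintro rfl; simpa using normSq_of_mem_sph hI

end ImaginaryUnit

lemma sph_nonempty : Sph.Nonempty :=
  ⟨⟨0, 1, 0, 0⟩, mem_sph_iff.2 ⟨rfl, by erw [normSq_def']; norm_num⟩⟩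

lemma re_mul_comm (p q : H) : (p * q).re = (q * p).re := by simp only [re_mul]; ring

section Slice

variable {I x y : H}

def sliceHom (hI : I ∈ Sph) : ℂ →ₐ[ℝ] H := Complex.liftAux I (mul_self_of_mem_sph hI)

lemma sliceHom_apply (hI : I ∈ Sph) (z : ℂ) : sliceHom hI z = (z.re : H) + z.im • I := by
  simp [sliceHom, Complex.liftAux_apply, algebraMap_def]

lemma sliceHom_neg (hI : I ∈ Sph) (z : ℂ) : sliceHom (neg_mem_sph hI) z = sliceHom hI (conj z) := by
  simp [sliceHom_apply]

lemma star_sliceHom (hI : I ∈ Sph) (z : ℂ) : star (sliceHom hI z) = sliceHom hI (conj z) := by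
  ext <;> simp [sliceHom_apply, re_of_mem_sph hI]

lemma slice_eq_range (hI : I ∈ Sph) : Slice I = (sliceHom hI).range := by
  ext q
  simp only [Slice, Set.mem_ofPred_eq, SetLike.mem_coe, AlgHom.mem_range, sliceHom_apply]
  exact ⟨fun ⟨a, b, h⟩ => ⟨⟨a, b⟩, h.symm⟩, fun ⟨z, h⟩ => ⟨z.re, z.im, h.symm⟩⟩

lemma mem_slice_iff (hI : I ∈ Sph) : x ∈ Slice I ↔ ∃ z, sliceHom hI z = x := by
  rw [slice_eq_range hI]; rfl

lemma add_mem_slice (hI : I ∈ Sph) (hx : x ∈ Slice I) (hy : y ∈ Slice I) : x + y ∈ Slice I := by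
  rw [slice_eq_range hI] at *; exact add_mem hx hy

lemma neg_mem_slice (hI : I ∈ Sph) (hx : x ∈ Slice I) : -x ∈ Slice I := by
  rw [slice_eq_range hI] at *; exact neg_mem hx

lemma sub_mem_slice (hI : I ∈ Sph) (hx : x ∈ Slice I) (hy : y ∈ Slice I) : x - y ∈ Slice I := by
  rw [slice_eq_range hI] at *; exact sub_mem hx hy

lemma mul_mem_slice (hI : I ∈ Sph) (hx : x ∈ Slice I) (hy : y ∈ Slice I) : x * y ∈ Slice I := by
  rw [slice_eq_range hI] at *; exact mul_mem hx hy

lemma star_mem_slice (hI : I ∈ Sph) (hx : x ∈ Slice I) : star x ∈ Slice I := by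
  obtain ⟨z, rfl⟩ := (mem_slice_iff hI).1 hx
  exact (mem_slice_iff hI).2 ⟨conj z, (star_sliceHom hI z).symm⟩

lemma self_mem_slice (hI : I ∈ Sph) : I ∈ Slice I :=
  (mem_slice_iff hI).2 ⟨Complex.I, Complex.liftAux_apply_I _ _⟩

lemma slice_mul_comm (hI : I ∈ Sph) (hx : x ∈ Slice I) (hy : y ∈ Slice I) : x * y = y * x := by
  obtain ⟨z, rfl⟩ := (mem_slice_iff hI).1 hx
  obtain ⟨w, rfl⟩ := (mem_slice_iff hI).1 hy
  rw [← map_mul, mul_comm, map_mul]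

end Slice

section SliceCoord

variable {L x : H}

/-- Coordinates on the slice `L_L`, extended to `ℍ` by orthogonal projection. -/
def sliceCoord (L : H) : H →L[ℝ] ℂ :=
  LinearMap.toContinuousLinearMap
    { toFun := fun q => ⟨q.re, -(q * L).re⟩
      map_add' := fun p q => Complex.ext (by simp) (by simp [add_mul]; ring)
      map_smul' := fun r q => Complex.ext (by simp) (by simp; ring) }

lemma sliceCoord_apply (L q : H) : sliceCoord L q = ⟨q.re, -(q * L).re⟩ := rfl

lemma sliceCoord_sliceHom (hL : L ∈ Sph) (z : ℂ) : sliceCoord L (sliceHom hL z) = z := by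
  apply Complex.ext <;>
    simp [sliceCoord_apply, sliceHom_apply, add_mul, mul_self_of_mem_sph hL, re_of_mem_sph hL]

lemma sliceHom_sliceCoord (hL : L ∈ Sph) (hx : x ∈ Slice L) : sliceHom hL (sliceCoord L x) = x := by
  obtain ⟨z, rfl⟩ := (mem_slice_iff hL).1 hx
  rw [sliceCoord_sliceHom]

lemma sliceCoord_mul_left (hL : L ∈ Sph) (q : H) :
    sliceCoord L (L * q) = Complex.I * sliceCoord L q := by
  have hre : ∀ p : H, (L * p).re = (p * L).re := fun p => by simp only [re_mul]; ring
  have hLqL : (L * q * L).re = -q.re := by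
    rw [mul_assoc, hre, mul_assoc, mul_self_of_mem_sph hL]; simp
  apply Complex.ext <;> simp [sliceCoord_apply, hre, hLqL]

end SliceCoord

section Orthogonal

variable {I J x : H}

lemma anticomm_of_orth (hI : I ∈ Sph) (hJ : J ∈ Sph) (hO : Orth I J) : J * I = -(I * J) := by
  have hIr := re_of_mem_sph hI
  have hJr := re_of_mem_sph hJ
  have hO' : I.imI * J.imI + I.imJ * J.imJ + I.imK * J.imK = 0 := by
    have h := hO
    simp only [Orth, re_mul, re_star, imI_star, imJ_star, imK_star, hIr] at h
    linarith
  ext <;> simp only [re_mul, imI_mul, imJ_mul, imK_mul, re_neg, imI_neg, imJ_neg, imK_neg,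
    hIr, hJr] <;> linarith

lemma re_mul_of_orth (hJ : J ∈ Sph) (hO : Orth I J) : (I * J).re = 0 := by
  have h : (I * star J).re = 0 := hO
  rwa [star_of_mem_sph hJ, mul_neg, re_neg, neg_eq_zero] at h

lemma orth_mul_eq_star_mul (hI : I ∈ Sph) (hJ : J ∈ Sph) (hO : Orth I J) (hx : x ∈ Slice I) :
    J * x = star x * J := by
  obtain ⟨z, rfl⟩ := (mem_slice_iff hI).1 hx
  rw [star_sliceHom, sliceHom_apply, sliceHom_apply, mul_add, add_mul, mul_smul_comm,
    smul_mul_assoc, anticomm_of_orth hI hJ hO, ← coe_commutes]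
  simp

lemma star_mul_orth (hI : I ∈ Sph) (hJ : J ∈ Sph) (hO : Orth I J) (hx : x ∈ Slice I) :
    star (x * J) = -(x * J) := by
  rw [star_mul, star_of_mem_sph hJ, neg_mul, orth_mul_eq_star_mul hI hJ hO (star_mem_slice hI hx),
    star_star]

lemma sliceCoord_mul_orth (hI : I ∈ Sph) (hJ : J ∈ Sph) (hO : Orth I J) (hx : x ∈ Slice I) :
    sliceCoord I (x * J) = 0 := by
  obtain ⟨z, rfl⟩ := (mem_slice_iff hI).1 hx
  have hIJI : (I * (J * I)).re = 0 := by
    rw [anticomm_of_orth hI hJ hO, mul_neg, ← mul_assoc, mul_self_of_mem_sph hI]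
    simp [re_of_mem_sph hJ]
  have hJI : (J * I).re = 0 := by
    rw [anticomm_of_orth hI hJ hO, re_neg, re_mul_of_orth hJ hO, neg_zero]
  rw [sliceHom_apply, add_mul, coe_mul_eq_smul, smul_mul_assoc]
  apply Complex.ext <;>
    simp only [sliceCoord_apply, add_mul, smul_mul_assoc, mul_assoc, re_add, re_smul,
      re_of_mem_sph hJ, re_mul_of_orth hJ hO, hIJI, hJI] <;> simp

end Orthogonal

lemma sliceCoord_add_mul_mul_star_sub_mul {I : H} (hI : I ∈ Sph) (α β : H) :
    sliceCoord I ((α + I * β) * star (α - I * β)) =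
      ⟨normSq α - normSq β, 2 * (α * star β).re⟩ := by
  have hre := re_of_mem_sph hI
  have hn := normSq_of_mem_sph hI
  rw [normSq_def', hre] at hn
  apply Complex.ext <;>
    simp only [sliceCoord_apply, normSq_def', re_mul, imI_mul, imJ_mul, imK_mul, re_add, imI_add,
      imJ_add, imK_add, re_sub, imI_sub, imJ_sub, imK_sub, re_star, imI_star, imJ_star, imK_star,
      hre]
  · linear_combination (-(β.re ^ 2 + β.imI ^ 2 + β.imJ ^ 2 + β.imK ^ 2)) * hn
  · linear_combination (2 * (α.re * β.re + α.imI * β.imI + α.imJ * β.imJ + α.imK * β.imK)) * hn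

section Split

variable {I J x α β a b c d a' b' c' d' : H}

lemma mul_mul_eq_neg_of_mem_slice (hI : I ∈ Sph) (hx : x ∈ Slice I) : I * x * I = -x := by
  rw [slice_mul_comm hI (self_mem_slice hI) hx, mul_assoc, mul_self_of_mem_sph hI, mul_neg_one]

lemma mul_mul_orth_mul_eq_self (hI : I ∈ Sph) (hJ : J ∈ Sph) (hO : Orth I J) (hx : x ∈ Slice I) :
    I * (x * J) * I = x * J := by
  rw [← mul_assoc, slice_mul_comm hI (self_mem_slice hI) hx, mul_assoc x, mul_assoc x,
    mul_assoc I, anticomm_of_orth hI hJ hO, mul_neg, ← mul_assoc, mul_self_of_mem_sph hI,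
    neg_one_mul, neg_neg]

lemma eq_and_eq_of_add_mul_orth (hI : I ∈ Sph) (hJ : J ∈ Sph) (hO : Orth I J)
    (ha : a ∈ Slice I) (hb : b ∈ Slice I) (hc : c ∈ Slice I) (hd : d ∈ Slice I)
    (h : a + b * J = c + d * J) : a = c ∧ b = d := by
  have hac : a = c := by
    have := congrArg (sliceCoord I) h
    rw [map_add, map_add, sliceCoord_mul_orth hI hJ hO hb, sliceCoord_mul_orth hI hJ hO hd,
      add_zero, add_zero] at this
    rw [← sliceHom_sliceCoord hI ha, ← sliceHom_sliceCoord hI hc, this]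
  subst hac
  exact ⟨rfl, mul_right_cancel₀ (ne_zero_of_mem_sph hJ) (add_left_cancel h)⟩

/-- Values of the regular conjugate: if `f(z) = a + bJ` and `f(z̄) = c + dJ` are
`α ± Iβ`, then `f^c(z) = c̄ - bJ` is `ᾱ + I β̄`. -/
lemma star_add_mul_star (hI : I ∈ Sph) (hJ : J ∈ Sph) (hO : Orth I J)
    (ha : a ∈ Slice I) (hb : b ∈ Slice I) (hc : c ∈ Slice I) (hd : d ∈ Slice I)
    (hu : α + I * β = a + b * J) (hv : α - I * β = c + d * J) :
    star α + I * star β = star c - b * J := by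
  have hI2 := mul_self_of_mem_sph hI
  have hsu : star (α + I * β) = star α - star β * I := by
    rw [star_add, star_mul, star_of_mem_sph hI, mul_neg, sub_eq_add_neg]
  have hsv : star (α - I * β) = star α + star β * I := by
    rw [star_sub, star_mul, star_of_mem_sph hI, mul_neg, sub_neg_eq_add]
  have hsab : star (a + b * J) = star a - b * J := by
    rw [star_add, star_mul_orth hI hJ hO hb, sub_eq_add_neg]
  have hscd : star (c + d * J) = star c - d * J := by
    rw [star_add, star_mul_orth hI hJ hO hd, sub_eq_add_neg]
  have hIβI : I * (star β * I) * I = -(I * star β) := by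
    rw [mul_assoc, mul_assoc, hI2, mul_neg_one, mul_neg]
  -- `2 ᾱ = ū + v̄` and `2 I β̄ = I (ū - v̄) I`, with `u = f(z)`, `v = f(z̄)`
  have h : (2 : ℝ) • (star α + I * star β) =
      star (a + b * J) + star (c + d * J) + I * (star (a + b * J) - star (c + d * J)) * I := by
    rw [← hu, ← hv, hsu, hsv, mul_sub, mul_sub, mul_add, sub_mul, sub_mul, add_mul, hIβI]
    module
  rw [hsab, hscd, show star a - b * J - (star c - d * J) = (star a - star c) + (d - b) * J by
    noncomm_ring, mul_add, add_mul, mul_mul_eq_neg_of_mem_slice hI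
      (sub_mem_slice hI (star_mem_slice hI ha) (star_mem_slice hI hc)),
    mul_mul_orth_mul_eq_self hI hJ hO (sub_mem_slice hI hd hb)] at h
  refine smul_right_injective H (two_ne_zero (α := ℝ)) ?_
  simp only [h, sub_mul]
  module

lemma add_mul_orth_mul_star (hI : I ∈ Sph) (hJ : J ∈ Sph) (hO : Orth I J)
    (hc : c ∈ Slice I) (hd : d ∈ Slice I) :
    (a + b * J) * star (c + d * J) = (a * star c + b * star d) + (b * c - a * d) * J := by
  have h1 : b * J * star c = b * c * J := by
    rw [mul_assoc, orth_mul_eq_star_mul hI hJ hO (star_mem_slice hI hc), star_star, ← mul_assoc]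
  have h2 : b * J * (d * J) = -(b * star d) := by
    rw [mul_assoc, ← mul_assoc J, orth_mul_eq_star_mul hI hJ hO hd, mul_assoc (star d),
      mul_self_of_mem_sph hJ, mul_neg_one, mul_neg]
  rw [star_add, star_mul_orth hI hJ hO hd, add_mul, mul_add, mul_add, h1, mul_neg, mul_neg, h2,
    sub_mul, ← mul_assoc]
  abel

lemma star_sub_mul_star (hI : I ∈ Sph) (hJ : J ∈ Sph) (hO : Orth I J)
    (ha : a ∈ Slice I) (hb : b ∈ Slice I) (hc : c ∈ Slice I) (hd : d ∈ Slice I)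
    (hu : α + I * β = a + b * J) (hv : α - I * β = c + d * J) :
    star α - I * star β = star a - d * J := by
  have := star_add_mul_star (β := -β) hI hJ hO hc hd ha hb (by rwa [mul_neg, ← sub_eq_add_neg])
    (by rwa [mul_neg, sub_neg_eq_add])
  rwa [star_neg, mul_neg, ← sub_eq_add_neg] at this

/-- The product formula of `f * f^c` at `z`, with `f(z) = a + bJ = α + Iβ`,
`f(z̄) = c + dJ = α - Iβ` and `f^c(z) = a' + b'J`, `f^c(z̄) = c' + d'J`. -/
lemma product_formula_conj_eq (hI : I ∈ Sph) (hJ : J ∈ Sph) (hO : Orth I J)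
    (ha : a ∈ Slice I) (hb : b ∈ Slice I) (hc : c ∈ Slice I) (hd : d ∈ Slice I)
    (ha' : a' ∈ Slice I) (hb' : b' ∈ Slice I) (hc' : c' ∈ Slice I) (hd' : d' ∈ Slice I)
    (hu : α + I * β = a + b * J) (hv : α - I * β = c + d * J)
    (hu' : star α + I * star β = a' + b' * J) (hv' : star α - I * star β = c' + d' * J) :
    (a * a' - b * star d') + (a * b' + b * star c') * J =
      ((normSq α - normSq β : ℝ) : H) + I * ((2 * (α * star β).re : ℝ) : H) := by
  obtain ⟨rfl, rfl⟩ : a' = star c ∧ b' = -b := by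
    refine eq_and_eq_of_add_mul_orth hI hJ hO ha' hb' (star_mem_slice hI hc)
      (neg_mem_slice hI hb) ?_
    rw [← hu', star_add_mul_star hI hJ hO ha hb hc hd hu hv, neg_mul, sub_eq_add_neg]
  obtain ⟨rfl, rfl⟩ : c' = star a ∧ d' = -d := by
    refine eq_and_eq_of_add_mul_orth hI hJ hO hc' hd' (star_mem_slice hI ha)
      (neg_mem_slice hI hd) ?_
    rw [← hv', star_sub_mul_star hI hJ hO ha hb hc hd hu hv, neg_mul, sub_eq_add_neg]
  have hs : a * star c + b * star d ∈ Slice I :=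
    add_mem_slice hI (mul_mem_slice hI ha (star_mem_slice hI hc))
      (mul_mem_slice hI hb (star_mem_slice hI hd))
  -- the `L_I`-part of `f(z) (f(z̄))‾ = (a c̄ + b d̄) + (b c - a d) J`
  have hcoord : sliceCoord I (a * star c + b * star d) =
      ⟨normSq α - normSq β, 2 * (α * star β).re⟩ := by
    rw [← sliceCoord_add_mul_mul_star_sub_mul hI, hu, hv, add_mul_orth_mul_star hI hJ hO hc hd,
      map_add (sliceCoord I) (a * star c + b * star d), sliceCoord_mul_orth hI hJ hO
        (sub_mem_slice hI (mul_mem_slice hI hb hc) (mul_mem_slice hI ha hd)), add_zero]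
  rw [star_neg, star_star, mul_neg, sub_neg_eq_add, mul_neg, slice_mul_comm hI hb ha,
    neg_add_cancel, zero_mul, add_zero, ← sliceHom_sliceCoord hI hs, hcoord, sliceHom_apply,
    mul_coe_eq_smul]

end Split

lemma exists_mem_sph_add_mul_eq_zero_iff {α β : H} :
    (∃ L ∈ Sph, α + L * β = 0) ↔ normSq α = normSq β ∧ (α * star β).re = 0 := by
  constructor
  · rintro ⟨L, hL, h⟩
    rw [add_eq_zero_iff_eq_neg.1 h, normSq_neg, map_mul, normSq_of_mem_sph hL, one_mul, neg_mul,
      re_neg, mul_assoc, self_mul_star, re_mul_comm, coe_mul_eq_smul, re_smul,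
      re_of_mem_sph hL, smul_zero, neg_zero]
    exact ⟨rfl, rfl⟩
  · rintro ⟨hn, hre⟩
    by_cases hβ : β = 0
    · obtain ⟨L, hL⟩ := sph_nonempty
      refine ⟨L, hL, ?_⟩
      rw [hβ, map_zero, normSq_eq_zero] at hn
      simp [hn, hβ]
    -- the root is `L = -α β̄ / |β|²`
    have hβn : normSq β ≠ 0 := normSq_ne_zero.2 hβ
    refine ⟨-((normSq β)⁻¹ • (α * star β)), mem_sph_iff.2 ⟨?_, ?_⟩, ?_⟩
    · simp [hre]
    · rw [normSq_neg, normSq_smul, map_mul, normSq_star, hn]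
      field_simp
    · rw [neg_mul, smul_mul_assoc, mul_assoc, star_mul_self, mul_coe_eq_smul, smul_smul,
        inv_mul_cancel₀ hβn, one_smul, add_neg_cancel]

lemma exists_mem_sph_coe_add_mul_coe_eq_zero_iff (a b : ℝ) :
    (∃ L ∈ Sph, (a : H) + L * b = 0) ↔ a = 0 ∧ b = 0 := by
  rw [exists_mem_sph_add_mul_eq_zero_iff, normSq_coe, normSq_coe, star_coe, ← coe_mul, re_coe]
  constructor
  · rintro ⟨hsq, hab⟩
    have ha : a = 0 := by
      refine pow_eq_zero_iff four_ne_zero |>.1 ?_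
      calc a ^ 4 = (a * b) ^ 2 := by rw [mul_pow, ← hsq]; ring
        _ = 0 := by rw [hab]; ring
    subst ha
    exact ⟨rfl, pow_eq_zero_iff two_ne_zero |>.1 (by rw [← hsq]; ring)⟩
  · rintro ⟨rfl, rfl⟩
    simp

/-- `φ` satisfies the Cauchy–Riemann equation `∂ₓφ + L ∂ᵧφ = 0` at `z`. -/
def HoloAt (L : H) (φ : ℂ → H) (z : ℂ) : Prop :=
  ∃ D : ℂ →L[ℝ] H, HasFDerivAt φ D z ∧ D 1 + L * D Complex.I = 0

namespace HoloAt

variable {L M : H} {φ ψ : ℂ → H} {z : ℂ}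

lemma sub (hφ : HoloAt L φ z) (hψ : HoloAt L ψ z) : HoloAt L (fun w => φ w - ψ w) z := by
  obtain ⟨D, hD, hcr⟩ := hφ
  obtain ⟨E, hE, hcr'⟩ := hψ
  refine ⟨D - E, hD.sub hE, ?_⟩
  rw [sub_apply, sub_apply, mul_sub, sub_add_sub_comm,
    hcr, hcr', sub_zero]

lemma const_mul (hφ : HoloAt M φ z) {c : H} (hc : c * M = L * c) :
    HoloAt L (fun w => c * φ w) z := by
  obtain ⟨D, hD, hcr⟩ := hφ
  refine ⟨(ContinuousLinearMap.mul ℝ H c).comp D,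
    (ContinuousLinearMap.mul ℝ H c).hasFDerivAt.comp z hD, ?_⟩
  simp only [ContinuousLinearMap.comp_apply, ContinuousLinearMap.mul_apply']
  rw [← mul_assoc, ← hc, mul_assoc, ← mul_add, hcr, mul_zero]

lemma mul_const (hφ : HoloAt L φ z) (c : H) : HoloAt L (fun w => φ w * c) z := by
  obtain ⟨D, hD, hcr⟩ := hφ
  refine ⟨((ContinuousLinearMap.mul ℝ H).flip c).comp D,
    ((ContinuousLinearMap.mul ℝ H).flip c).hasFDerivAt.comp z hD, ?_⟩
  simp only [ContinuousLinearMap.comp_apply, ContinuousLinearMap.flip_apply,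
    ContinuousLinearMap.mul_apply']
  rw [← mul_assoc, ← add_mul, hcr, zero_mul]

lemma comp_conj (hφ : HoloAt M φ (conj z)) : HoloAt (-M) (fun w => φ (conj w)) z := by
  obtain ⟨D, hD, hcr⟩ := hφ
  refine ⟨D.comp Complex.conjCLE.toContinuousLinearMap,
    hD.comp z Complex.conjCLE.toContinuousLinearMap.hasFDerivAt, ?_⟩
  simpa using hcr

lemma differentiableAt_sliceCoord (hL : L ∈ Sph) (hφ : HoloAt L φ z) :
    DifferentiableAt ℂ (fun w => sliceCoord L (φ w)) z := by
  obtain ⟨D, hD, hcr⟩ := hφ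
  -- `sliceCoord L` turns left multiplication by `L` into multiplication by `i`
  have hcr' : ((sliceCoord L).comp D) Complex.I = Complex.I • ((sliceCoord L).comp D) 1 := by
    rw [ContinuousLinearMap.comp_apply, ContinuousLinearMap.comp_apply,
      eq_neg_of_add_eq_zero_left hcr, map_neg, sliceCoord_mul_left hL, smul_eq_mul, mul_neg,
      ← mul_assoc, Complex.I_mul_I, neg_one_mul, neg_neg]
  exact ((sliceCoord L).hasFDerivAt.comp z hD).complexOfReal_hasFDerivAt hcr' |>.differentiableAt

end HoloAt

theorem eqOn_zero_of_holoAt {L : H} (hL : L ∈ Sph) {φ : ℂ → H} {U : Set ℂ} (hU : IsOpen U)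
    (hUc : IsPreconnected U) {r₀ : ℝ} (hr₀ : (r₀ : ℂ) ∈ U) (hreal : ∀ r : ℝ, φ r = 0)
    (hφ : ∀ z ∈ U, HoloAt L φ z) : ∀ z ∈ U, φ z = 0 := by
  -- each `sliceCoord L (φ · c)` is holomorphic and vanishes on `ℝ`; then take `c = φ(z)‾`
  have hcoord : ∀ c : H, ∀ z ∈ U, sliceCoord L (φ z * c) = 0 := by
    intro c
    have hd : DifferentiableOn ℂ (fun w => sliceCoord L (φ w * c)) U := fun z hz =>
      (((hφ z hz).mul_const c).differentiableAt_sliceCoord hL).differentiableWithinAt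
    have hlim : Filter.Tendsto (fun r : ℝ => (r : ℂ)) (𝓝[≠] r₀) (𝓝[≠] (r₀ : ℂ)) :=
      Complex.continuous_ofReal.continuousWithinAt.tendsto_nhdsWithin fun _ h => by simpa using h
    have hfreq : ∃ᶠ w in 𝓝[≠] (r₀ : ℂ), sliceCoord L (φ w * c) = 0 :=
      hlim.frequently (Filter.Frequently.of_forall fun r => by simp [hreal])
    exact (hd.analyticOnNhd hU).eqOn_zero_of_preconnected_of_frequently_eq_zero hUc hr₀ hfreq
  intro z hz
  have h := congrArg Complex.re (hcoord (star (φ z)) z hz)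
  rw [sliceCoord_apply, self_mul_star, re_coe, Complex.zero_re] at h
  exact normSq_eq_zero.1 h

lemma HoloSlice.holoAt {Ω : Set H} {g : H → H} {I : H} (hg : HoloSlice Ω g I) (hI : I ∈ Sph)
    {z : ℂ} (hz : sliceHom hI z ∈ Ω) : HoloAt I (fun w => g (sliceHom hI w)) z := by
  rw [sliceHom_apply] at hz
  obtain ⟨hd, hcr⟩ := hg z.re z.im hz
  have hcomp : (fun w => g (sliceHom hI w)) =
      (fun p : ℝ × ℝ => g ((p.1 : H) + p.2 • I)) ∘ Complex.equivRealProdCLM := by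
    funext w; simp [sliceHom_apply]
  refine ⟨(fderiv ℝ (fun p : ℝ × ℝ => g ((p.1 : H) + p.2 • I)) (z.re, z.im)).comp
    Complex.equivRealProdCLM.toContinuousLinearMap, ?_, by simpa using hcr⟩
  rw [hcomp]
  exact hd.hasFDerivAt.comp z Complex.equivRealProdCLM.toContinuousLinearMap.hasFDerivAt

lemma continuous_sliceHom {I : H} (hI : I ∈ Sph) : Continuous (sliceHom hI) :=
  (sliceHom hI).toLinearMap.continuous_of_finiteDimensional

lemma IsSliceDomain.isPreconnected_preimage_sliceHom {Ω : Set H} (hΩ : IsSliceDomain Ω) {L : H}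
    (hL : L ∈ Sph) : IsPreconnected (sliceHom hL ⁻¹' Ω) := by
  have himage : sliceHom hL ⁻¹' Ω = sliceCoord L '' (Ω ∩ Slice L) := by
    ext z
    refine ⟨fun hz => ⟨sliceHom hL z, ⟨hz, (mem_slice_iff hL).2 ⟨z, rfl⟩⟩,
      sliceCoord_sliceHom hL z⟩, ?_⟩
    rintro ⟨q, ⟨hq, hqL⟩, rfl⟩
    rwa [Set.mem_preimage, sliceHom_sliceCoord hL hqL]
  rw [himage]
  exact ((hΩ.2.2.2 L hL).image _ (sliceCoord L).continuous.continuousOn).isPreconnected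

def IsAffineOnSphere (g : H → H) (x y : ℝ) (α β : H) : Prop :=
  ∀ L ∈ Sph, g ((x : H) + y • L) = α + L * β

section RepresentationFormula

variable {Ω : Set H} {g : H → H} {I L : H}

lemma smul_one_sub_mul_mul (hI : I ∈ Sph) (hL : L ∈ Sph) :
    ((2⁻¹ : ℝ) • (1 - L * I)) * I = L * ((2⁻¹ : ℝ) • (1 - L * I)) := by
  have hLII : L * I * I = -L := by rw [mul_assoc, mul_self_of_mem_sph hI, mul_neg_one]
  have hLLI : L * (L * I) = -I := by rw [← mul_assoc, mul_self_of_mem_sph hL, neg_one_mul]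
  simp only [smul_mul_assoc, mul_smul_comm, sub_mul, mul_sub, one_mul, mul_one, hLII, hLLI]
  module

lemma smul_one_add_mul_mul_neg (hI : I ∈ Sph) (hL : L ∈ Sph) :
    ((2⁻¹ : ℝ) • (1 + L * I)) * -I = L * ((2⁻¹ : ℝ) • (1 + L * I)) := by
  have hLII : L * I * I = -L := by rw [mul_assoc, mul_self_of_mem_sph hI, mul_neg_one]
  have hLLI : L * (L * I) = -I := by rw [← mul_assoc, mul_self_of_mem_sph hL, neg_one_mul]
  simp only [smul_mul_assoc, mul_smul_comm, mul_neg, add_mul, mul_add, one_mul, mul_one, hLII,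
    hLLI]
  module

theorem SliceRegular.eq_on_slice (hΩ : IsSymmSliceDomain Ω) (hg : SliceRegular Ω g)
    (hI : I ∈ Sph) (hL : L ∈ Sph) {w : ℂ} (hw : sliceHom hL w ∈ Ω) :
    g (sliceHom hL w) = (2⁻¹ : ℝ) • (1 - L * I) * g (sliceHom hI w)
      + (2⁻¹ : ℝ) • (1 + L * I) * g (sliceHom hI (conj w)) := by
  obtain ⟨hsd, hsymm⟩ := hΩ
  obtain ⟨-, hr₀, r₀, rfl⟩ := hsd.2.2.1
  have hmem : ∀ w ∈ sliceHom hL ⁻¹' Ω, sliceHom hI w ∈ Ω ∧ sliceHom (neg_mem_sph hI) w ∈ Ω := by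
    intro w hw
    simp only [Set.mem_preimage, sliceHom_apply] at hw ⊢
    exact ⟨hsymm _ _ L hL hw I hI, hsymm _ _ L hL hw (-I) (neg_mem_sph hI)⟩
  set c₁ : H := (2⁻¹ : ℝ) • (1 - L * I)
  set c₂ : H := (2⁻¹ : ℝ) • (1 + L * I)
  have hsum : c₁ + c₂ = 1 := by simp only [c₁, c₂]; module
  -- both sides solve the Cauchy–Riemann equation for `L` and agree on `ℝ`
  rw [← sub_eq_zero, ← sub_sub]
  refine eqOn_zero_of_holoAt (φ := fun w =>
      g (sliceHom hL w) - c₁ * g (sliceHom hI w) - c₂ * g (sliceHom hI (conj w))) hL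
    (hsd.1.preimage (continuous_sliceHom hL)) (hsd.isPreconnected_preimage_sliceHom hL)
    (r₀ := r₀) (by rwa [Set.mem_preimage, AlgHom.map_coe_real_complex]) ?_ ?_ w hw
  · intro r
    simp only [Complex.conj_ofReal, AlgHom.map_coe_real_complex, sub_sub, ← add_mul, hsum,
      one_mul, sub_self]
  · intro w hw
    have hconj := ((hg I hI).holoAt hI (sliceHom_neg hI w ▸ (hmem w hw).2)).comp_conj
    exact (((hg L hL).holoAt hL hw).sub (((hg I hI).holoAt hI (hmem w hw).1).const_mul
      (smul_one_sub_mul_mul hI hL))).sub (hconj.const_mul (smul_one_add_mul_mul_neg hI hL))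

/-- The Representation Formula. -/
theorem SliceRegular.isAffineOnSphere (hΩ : IsSymmSliceDomain Ω) (hg : SliceRegular Ω g)
    {α β : H} (hI : I ∈ Sph) {x y : ℝ} (hz : (x : H) + y • I ∈ Ω)
    (hpos : g ((x : H) + y • I) = α + I * β) (hneg : g ((x : H) + y • -I) = α - I * β) :
    IsAffineOnSphere g x y α β := by
  intro L hL
  have hw : sliceHom hL ⟨x, y⟩ ∈ Ω := by
    simpa [sliceHom_apply] using hΩ.2 x y I hI hz L hL
  have h := hg.eq_on_slice hΩ hI hL hw
  rw [← sliceHom_neg hI, sliceHom_apply, sliceHom_apply, sliceHom_apply, hpos, hneg] at h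
  have hLIIβ : L * I * (I * β) = -(L * β) := by
    rw [← mul_assoc, mul_assoc L, mul_self_of_mem_sph hI, mul_neg_one, neg_mul]
  rw [h]
  simp only [smul_mul_assoc, add_mul, sub_mul, one_mul, mul_add, mul_sub, hLIIβ]
  module

end RepresentationFormula

namespace IsAffineOnSphere

variable {g : H → H} {x y : ℝ} {α β I : H}

lemma apply_neg (hg : IsAffineOnSphere g x y α β) (hI : I ∈ Sph) :
    g ((x : H) + y • -I) = α - I * β := by
  rw [hg _ (neg_mem_sph hI), neg_mul, sub_eq_add_neg]

lemma exists_zero_iff (hg : IsAffineOnSphere g x y α β) :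
    (∃ q ∈ sphSet x y, g q = 0) ↔ ∃ L ∈ Sph, α + L * β = 0 := by
  constructor
  · rintro ⟨-, ⟨L, hL, rfl⟩, h⟩
    exact ⟨L, hL, (hg L hL).symm.trans h⟩
  · rintro ⟨L, hL, h⟩
    exact ⟨_, ⟨L, hL, rfl⟩, (hg L hL).trans h⟩

lemma forall_zero_iff_exists_zero {a b : ℝ} (hg : IsAffineOnSphere g x y a b) :
    (∀ q ∈ sphSet x y, g q = 0) ↔ ∃ q ∈ sphSet x y, g q = 0 := by
  refine ⟨fun h => ?_, fun h => ?_⟩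
  · obtain ⟨I, hI⟩ := sph_nonempty
    exact ⟨_, ⟨I, hI, rfl⟩, h _ ⟨I, hI, rfl⟩⟩
  · obtain ⟨rfl, rfl⟩ := (exists_mem_sph_coe_add_mul_coe_eq_zero_iff a b).1 (hg.exists_zero_iff.1 h)
    rintro q ⟨L, hL, rfl⟩
    simp [hg L hL]

end IsAffineOnSphere

lemma exists_add_mul_eq_and_sub_mul_eq {I : H} (hI : I ∈ Sph) (u v : H) :
    ∃ α β, α + I * β = u ∧ α - I * β = v := by
  refine ⟨(2⁻¹ : ℝ) • (u + v), (2⁻¹ : ℝ) • (I * (v - u)), ?_, ?_⟩ <;>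
    rw [mul_smul_comm, ← mul_assoc, mul_self_of_mem_sph hI, neg_one_mul] <;> module

theorem SliceRegular.exists_isAffineOnSphere {Ω : Set H} (hΩ : IsSymmSliceDomain Ω) {g : H → H}
    (hg : SliceRegular Ω g) {x y : ℝ} (hs : sphSet x y ⊆ Ω) :
    ∃ α β, IsAffineOnSphere g x y α β := by
  obtain ⟨I, hI⟩ := sph_nonempty
  obtain ⟨α, β, hpos, hneg⟩ := exists_add_mul_eq_and_sub_mul_eq hI (g (x + y • I)) (g (x + y • -I))
  exact ⟨α, β, hg.isAffineOnSphere hΩ hI (hs ⟨I, hI, rfl⟩) hpos.symm hneg.symm⟩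

lemma star_ofReal_add_smul {I : H} (hI : I ∈ Sph) (x y : ℝ) :
    star ((x : H) + y • I) = (x : H) + y • -I := by
  rw [star_add, star_coe, Quaternion.star_smul, star_of_mem_sph hI]

section SphereOfSlice

variable {Ω : Set H} {f fc fs F G : H → H} {x y : ℝ} {α β I J : H}

lemma mem_inter_slice_of_sphSet_subset (hI : I ∈ Sph) (hs : sphSet x y ⊆ Ω) :
    (x : H) + y • I ∈ Ω ∩ Slice I ∧ star ((x : H) + y • I) ∈ Ω ∩ Slice I := by
  refine ⟨⟨hs ⟨I, hI, rfl⟩, x, y, rfl⟩, ?_, star_mem_slice hI ⟨x, y, rfl⟩⟩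
  rw [star_ofReal_add_smul hI]
  exact hs ⟨-I, neg_mem_sph hI, rfl⟩

lemma IsSplitting.eq_of_isAffineOnSphere (hFG : IsSplitting Ω f I J F G) (hI : I ∈ Sph)
    (hs : sphSet x y ⊆ Ω) (hf : IsAffineOnSphere f x y α β) :
    α + I * β = F ((x : H) + y • I) + G ((x : H) + y • I) * J ∧
      α - I * β = F (star ((x : H) + y • I)) + G (star ((x : H) + y • I)) * J := by
  obtain ⟨hz, hz'⟩ := mem_inter_slice_of_sphSet_subset hI hs
  refine ⟨(hf I hI).symm.trans (hFG.eq _ hz), ?_⟩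
  rw [← hFG.eq _ hz', star_ofReal_add_smul hI, hf.apply_neg hI]

theorem IsRegularConj.isAffineOnSphere (hΩ : IsSymmSliceDomain Ω) (hfc : IsRegularConj Ω f fc)
    (hs : sphSet x y ⊆ Ω) (hf : IsAffineOnSphere f x y α β) :
    IsAffineOnSphere fc x y (star α) (star β) := by
  obtain ⟨hreg, I, hI, J, hJ, hO, F, G, hFG, hfc_eq⟩ := hfc
  obtain ⟨hz, hz'⟩ := mem_inter_slice_of_sphSet_subset hI hs
  obtain ⟨hu, hv⟩ := hFG.eq_of_isAffineOnSphere hI hs hf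
  have hmem := fun q hq => And.intro (hFG.mapsF q hq) (hFG.mapsG q hq)
  refine hreg.isAffineOnSphere hΩ hI hz.1 ?_ ?_
  · rw [hfc_eq _ hz, star_add_mul_star hI hJ hO (hmem _ hz).1 (hmem _ hz).2 (hmem _ hz').1
      (hmem _ hz').2 hu hv]
  · rw [← star_ofReal_add_smul hI, hfc_eq _ hz', star_star, star_sub_mul_star hI hJ hO
      (hmem _ hz).1 (hmem _ hz).2 (hmem _ hz').1 (hmem _ hz').2 hu hv]

theorem IsRegularProduct.isAffineOnSphere_symm (hΩ : IsSymmSliceDomain Ω)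
    (hfs : IsRegularProduct Ω f fc fs) (hs : sphSet x y ⊆ Ω) (hf : IsAffineOnSphere f x y α β)
    (hfc : IsAffineOnSphere fc x y (star α) (star β)) :
    IsAffineOnSphere fs x y (normSq α - normSq β : ℝ) (2 * (α * star β).re : ℝ) := by
  obtain ⟨hreg, I, hI, J, hJ, hO, F, G, F', G', hFG, hFG', hprod⟩ := hfs
  obtain ⟨hz, hz'⟩ := mem_inter_slice_of_sphSet_subset hI hs
  obtain ⟨hu, hv⟩ := hFG.eq_of_isAffineOnSphere hI hs hf
  obtain ⟨hu', hv'⟩ := hFG'.eq_of_isAffineOnSphere hI hs hfc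
  have hmem := fun q hq => And.intro (hFG.mapsF q hq) (hFG.mapsG q hq)
  have hmem' := fun q hq => And.intro (hFG'.mapsF q hq) (hFG'.mapsG q hq)
  refine hreg.isAffineOnSphere hΩ hI hz.1 ?_ ?_
  · rw [hprod _ hz]
    exact product_formula_conj_eq hI hJ hO (hmem _ hz).1 (hmem _ hz).2 (hmem _ hz').1
      (hmem _ hz').2 (hmem' _ hz).1 (hmem' _ hz).2 (hmem' _ hz').1 (hmem' _ hz').2 hu hv hu' hv'
  · -- at `z̄` the roles of `β` and `-β` are exchanged
    rw [← star_ofReal_add_smul hI, hprod _ hz', star_star,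
      product_formula_conj_eq (β := -β) hI hJ hO (hmem _ hz').1 (hmem _ hz').2 (hmem _ hz).1
        (hmem _ hz).2 (hmem' _ hz').1 (hmem' _ hz').2 (hmem' _ hz).1 (hmem' _ hz).2
        (by rwa [mul_neg, ← sub_eq_add_neg]) (by rwa [mul_neg, sub_neg_eq_add])
        (by rwa [star_neg, mul_neg, ← sub_eq_add_neg]) (by rwa [star_neg, mul_neg, sub_neg_eq_add])]
    simp only [normSq_neg, star_neg, mul_neg, re_neg, coe_neg, sub_eq_add_neg]

end SphereOfSlice

/-- on a sphere `S₀ = x₀ + y₀𝕊 ⊂ Ω`: `f` has a zero in `S₀`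
iff `f^c` has a zero in `S₀`, iff `f^s` has a zero in `S₀`, iff `f^s`
vanishes identically on `S₀`. -/
theorem zeros_of_conjugate_and_symmetrization (Ω : Set H) (hΩ : IsSymmSliceDomain Ω)
    (f fc fs : H → H) (hf : SliceRegular Ω f)
    (hfc : IsRegularConj Ω f fc) (hfs : IsRegularProduct Ω f fc fs)
    (x₀ y₀ : ℝ) (hs : sphSet x₀ y₀ ⊆ Ω) :
    ((∃ q ∈ sphSet x₀ y₀, f q = 0) ↔ (∃ q ∈ sphSet x₀ y₀, fc q = 0)) ∧
    ((∃ q ∈ sphSet x₀ y₀, f q = 0) ↔ (∃ q ∈ sphSet x₀ y₀, fs q = 0)) ∧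
    ((∃ q ∈ sphSet x₀ y₀, f q = 0) ↔ (∀ q ∈ sphSet x₀ y₀, fs q = 0)) := by
  obtain ⟨α, β, hf_aff⟩ := hf.exists_isAffineOnSphere hΩ hs
  have hfc_aff := hfc.isAffineOnSphere hΩ hs hf_aff
  have hfs_aff := hfs.isAffineOnSphere_symm hΩ hs hf_aff hfc_aff
  have hzero_f : (∃ q ∈ sphSet x₀ y₀, f q = 0) ↔
      normSq α = normSq β ∧ (α * star β).re = 0 := by
    rw [hf_aff.exists_zero_iff, exists_mem_sph_add_mul_eq_zero_iff]
  have hzero_fc : (∃ q ∈ sphSet x₀ y₀, fc q = 0) ↔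
      normSq α = normSq β ∧ (α * star β).re = 0 := by
    rw [hfc_aff.exists_zero_iff, exists_mem_sph_add_mul_eq_zero_iff, normSq_star, normSq_star,
      star_star, ← re_star, star_mul, star_star, re_mul_comm]
  have hzero_fs : (∃ q ∈ sphSet x₀ y₀, fs q = 0) ↔
      normSq α = normSq β ∧ (α * star β).re = 0 := by
    rw [hfs_aff.exists_zero_iff, exists_mem_sph_coe_add_mul_coe_eq_zero_iff, sub_eq_zero,
      mul_eq_zero, or_iff_right two_ne_zero]
  exact ⟨hzero_f.trans hzero_fc.symm, hzero_f.trans hzero_fs.symm,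
    hzero_f.trans (hfs_aff.forall_zero_iff_exists_zero.trans hzero_fs).symm⟩
end
end
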